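/- An automaton with timers A is race-avoiding if and only if every padded timed run of A with races can be wiggled, and this holds if and only if for every padded timed run ρ of A the block graph G_ρ is acyclic. -/

import Mathlib

set_option maxHeartbeats 1000000

namespace AwT

/-- Actions of an automaton with timers: reading an input, or processing the timeout of a timer. -/
inductive Act (I X : Type) where
  | input : I → Act I X
  | timeout : X → Act I X

/-- Updates: `some (x, c)` starts timer `x` with positive integer value `c`; `none` is `⊥`. -/
abbrev Upd (X : Type) := Option (X × ℕ+)

/-- An automaton with timers (AT). `X` is the (finite) set of timers, `I` the (finite) set of
inputs, `Q` the (finite) set of states. -/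
structure AT (X I Q : Type) [DecidableEq X] where
  q0 : Q
  χ : Q → Finset X
  δ : Q → Act I X → Option (Q × Upd X)
  init_active : χ q0 = ∅
  defined_iff : ∀ q a, (δ q a).isSome ↔
      (∃ i, a = Act.input i) ∨ (∃ x ∈ χ q, a = Act.timeout x)
  timeout_self : ∀ q x q' y c, δ q (Act.timeout x) = some (q', some (y, c)) → y = x
  noupdate_sub : ∀ q a q', δ q a = some (q', none) → χ q' ⊆ χ q
  noupdate_timeout : ∀ q x q', δ q (Act.timeout x) = some (q', none) → x ∉ χ q'
  update_mem : ∀ q a q' x c, δ q a = some (q', some (x, c)) → x ∈ χ q'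
  update_sub : ∀ q a q' x c, δ q a = some (q', some (x, c)) → χ q' \ {x} ⊆ χ q

variable {X I Q : Type} [DecidableEq X]

/-- A timed run `(q₀,κ₀) d₁ i₁/u₁ … dₙ iₙ/uₙ d_{n+1} (q,κ)` of an AT, with `n` discrete
transitions.  `states k` and `vals k` give the configuration before the `k`-th delay,
`delays k` is the `k`-th delay, and `acts k`/`upds k` are the `k`-th action and update. -/
structure TimedRun (A : AT X I Q) (n : ℕ) where
  states : Fin (n+1) → Q
  vals : Fin (n+1) → X → ℝ
  delays : Fin (n+1) → ℝ
  acts : Fin n → Act I X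
  upds : Fin n → Upd X
  init_state : states 0 = A.q0
  init_val : ∀ x, vals 0 x = 0
  delays_nonneg : ∀ k, 0 ≤ delays k
  delays_le : ∀ k, ∀ x ∈ A.χ (states k), delays k ≤ vals k x
  trans : ∀ k : Fin n, A.δ (states k.castSucc) (acts k) = some (states k.succ, upds k)
  timeout_zero : ∀ (k : Fin n) (x : X), acts k = Act.timeout x →
      vals k.castSucc x - delays k.castSucc = 0
  val_step : ∀ (k : Fin n) (y : X),
      vals k.succ y = (upds k).elim (vals k.castSucc y - delays k.castSucc)
        (fun p => if y = p.1 then ((p.2 : ℕ) : ℝ) else vals k.castSucc y - delays k.castSucc)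

variable {A : AT X I Q} {n : ℕ}

/-- A timed run is padded if its first and last delays are positive and no active timer has
value 0 in its last configuration. -/
def Padded (ρ : TimedRun A n) : Prop :=
  0 < ρ.delays 0 ∧ 0 < ρ.delays (Fin.last n) ∧
    ∀ x ∈ A.χ (ρ.states (Fin.last n)),
      ρ.vals (Fin.last n) x - ρ.delays (Fin.last n) ≠ 0

/-- Timer fates of blocks: `⊥`, `●` (discarded at value zero), `×`. -/
inductive Fate where
  | bot | disc0 | cross
  deriving DecidableEq

/-- The transition at index `ℓ` discards the timer `x`: `x` is active before the transition,
the action is not `to[x]`, and the transition stops or restarts `x`. -/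
def Discards (ρ : TimedRun A n) (ℓ : Fin n) (x : X) : Prop :=
  x ∈ A.χ (ρ.states ℓ.castSucc) ∧ ρ.acts ℓ ≠ Act.timeout x ∧
    (x ∉ A.χ (ρ.states ℓ.succ) ∨ ∃ c, ρ.upds ℓ = some (x, c))

/-- Action `k` triggers action `k'`. -/
def Triggers (ρ : TimedRun A n) (k k' : Fin n) : Prop :=
  k < k' ∧ ∃ x c, ρ.upds k = some (x, c) ∧ ρ.acts k' = Act.timeout x ∧
    ∀ ℓ, k < ℓ → ℓ < k' → ρ.acts ℓ ≠ Act.timeout x ∧ ¬ Discards ρ ℓ x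

/-- After action `k` (which restarts `x`), the first transition discarding `x` does so while the
value of `x` is zero. -/
def DiscardedAtZeroAfter (ρ : TimedRun A n) (k : Fin n) (x : X) : Prop :=
  ∃ ℓ, k < ℓ ∧ Discards ρ ℓ x ∧ (∀ m, k < m → m < ℓ → ¬ Discards ρ m x) ∧
    ρ.vals ℓ.castSucc x - ρ.delays ℓ.castSucc = 0

/-- `γ` is the timer fate of a block whose index sequence is `ks`. -/
def FateOf (ρ : TimedRun A n) (ks : List (Fin n)) (γ : Fate) : Prop :=
  ∀ k, ks.getLast? = some k →
    ((ρ.upds k = none → γ = Fate.bot) ∧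
     ∀ x c, ρ.upds k = some (x, c) →
        ((DiscardedAtZeroAfter ρ k x → γ = Fate.disc0) ∧
         (¬ DiscardedAtZeroAfter ρ k x → γ = Fate.cross)))

/-- `(ks, γ)` is a block of `ρ`: `ks` is a maximal chain of actions each triggering the next,
starting with an input-action, and `γ` is its timer fate. -/
def IsBlock (ρ : TimedRun A n) (ks : List (Fin n)) (γ : Fate) : Prop :=
  ks ≠ [] ∧ List.Chain' (Triggers ρ) ks ∧
    (∀ k, ks.head? = some k → ∃ i, ρ.acts k = Act.input i) ∧
    (∀ k k', ks.getLast? = some k → ¬ Triggers ρ k k') ∧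
    FateOf ρ ks γ

/-- The sum of the delays strictly between action `k` and action `k'` (for `k ≤ k'`). -/
def delayBetween (ρ : TimedRun A n) (k k' : Fin n) : ℝ :=
  ∑ ℓ ∈ Finset.Ioc k k', ρ.delays ℓ.castSucc

/-- `B ≺ B'`: blocks `B` and `B'` participate in a race, witnessed either by an action of `B`
occurring before an action of `B'` with total delay zero in between, or by an action of `B`
being the first to discard the timer (re)started by the last action of `B'` while it has
value zero. -/
def Prec (ρ : TimedRun A n) (B B' : List (Fin n) × Fate) : Prop :=
  (∃ k ∈ B.1, ∃ k' ∈ B'.1, k < k' ∧ delayBetween ρ k k' = 0) ∨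
  (B'.2 = Fate.disc0 ∧ ∃ k' x c, B'.1.getLast? = some k' ∧ ρ.upds k' = some (x, c) ∧
     ∃ ℓ ∈ B.1, k' < ℓ ∧ Discards ρ ℓ x ∧ ∀ m, k' < m → m < ℓ → ¬ Discards ρ m x)

/-- Two blocks participate in a (common) race. -/
def BlocksRace (ρ : TimedRun A n) (B B' : List (Fin n) × Fate) : Prop :=
  Prec ρ B B' ∨ Prec ρ B' B

/-- The run contains a race. -/
def HasRace (ρ : TimedRun A n) : Prop :=
  ∃ B B' : List (Fin n) × Fate, IsBlock ρ B.1 B.2 ∧ IsBlock ρ B'.1 B'.2 ∧ B ≠ B' ∧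
    BlocksRace ρ B B'

/-- The block graph of `ρ` (vertices: blocks, edges: `≺`) has a cycle. -/
def HasCycle (ρ : TimedRun A n) : Prop :=
  ∃ (m : ℕ) (f : Fin (m+1) → List (Fin n) × Fate),
    0 < m ∧ (∀ j, IsBlock ρ (f j).1 (f j).2) ∧ f (Fin.last m) = f 0 ∧
      ∀ j : Fin m, Prec ρ (f j.castSucc) (f j.succ)

open Classical in
/-- The delays of `ρ` after shifting the block whose set of action indices is `S` by `ε`:
the delay preceding an action of the block whose predecessor is not in the block gains `ε`,
and the delay following an action of the block whose successor is not in the block loses `ε`. -/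
noncomputable def wiggledDelay (ρ : TimedRun A n) (S : Set (Fin n)) (ε : ℝ)
    (j : Fin (n+1)) : ℝ :=
  ρ.delays j
    + (if (∃ k : Fin n, k.castSucc = j ∧ k ∈ S ∧ ∀ k' : Fin n, k'.succ = j → k' ∉ S)
        then ε else 0)
    - (if (∃ k : Fin n, k.succ = j ∧ k ∈ S ∧ ∀ k' : Fin n, k'.castSucc = j → k' ∉ S)
        then ε else 0)

/-- `ρ'` is obtained from `ρ` by shifting the actions with indices in `S` by `ε`. -/
def WiggleSpec (ρ ρ' : TimedRun A n) (S : Set (Fin n)) (ε : ℝ) : Prop :=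
  ρ'.states = ρ.states ∧ ρ'.acts = ρ.acts ∧ ρ'.upds = ρ.upds ∧
    ∀ j, ρ'.delays j = wiggledDelay ρ S ε j

/-- The untimed trace of a run: the alternating sequence of states and actions. -/
def untime (ρ : TimedRun A n) : List (Q × Act I X) × Q :=
  (List.ofFn (fun k : Fin n => (ρ.states k.castSucc, ρ.acts k)), ρ.states (Fin.last n))

/-- The block with index sequence `ks` can be wiggled: for some `ε ≠ 0`, shifting it by `ε`
yields a padded timed run (with the same untimed trace) in which it participates in no race. -/
def CanWiggleBlock (ρ : TimedRun A n) (ks : List (Fin n)) : Prop :=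
  ∃ ε : ℝ, ε ≠ 0 ∧ ∃ ρ' : TimedRun A n, WiggleSpec ρ ρ' {k | k ∈ ks} ε ∧ Padded ρ' ∧
    ∀ (γ₁ : Fate) (ks₂ : List (Fin n)) (γ₂ : Fate),
      IsBlock ρ' ks γ₁ → IsBlock ρ' ks₂ γ₂ → (ks, γ₁) ≠ (ks₂, γ₂) →
        ¬ BlocksRace ρ' (ks, γ₁) (ks₂, γ₂)

/-- One wiggling step: wiggle a single block of `ρ`. -/
def WiggleStep (ρ ρ' : TimedRun A n) : Prop :=
  ∃ (ks : List (Fin n)) (γ : Fate) (ε : ℝ), ε ≠ 0 ∧ IsBlock ρ ks γ ∧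
    WiggleSpec ρ ρ' {k | k ∈ ks} ε ∧ Padded ρ' ∧
    ∀ (γ₁ : Fate) (ks₂ : List (Fin n)) (γ₂ : Fate),
      IsBlock ρ' ks γ₁ → IsBlock ρ' ks₂ γ₂ → (ks, γ₁) ≠ (ks₂, γ₂) →
        ¬ BlocksRace ρ' (ks, γ₁) (ks₂, γ₂)

/-- `ρ` can be wiggled: wiggling its blocks one at a time yields a race-free padded run with
the same untimed trace. -/
def Wigglable (ρ : TimedRun A n) : Prop :=
  ∃ ρ' : TimedRun A n, Relation.ReflTransGen WiggleStep ρ ρ' ∧ Padded ρ' ∧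
    ¬ HasRace ρ' ∧ untime ρ' = untime ρ

/-- `A` is race-avoiding. -/
def RaceAvoiding (A : AT X I Q) : Prop :=
  ∀ (n : ℕ) (ρ : TimedRun A n), Padded ρ → HasRace ρ →
    ∃ (n' : ℕ) (ρ' : TimedRun A n'), Padded ρ' ∧ ¬ HasRace ρ' ∧ untime ρ' = untime ρ

/-- All delays of the run are strictly positive. -/
def AllPos (ρ : TimedRun A n) : Prop := ∀ j, 0 < ρ.delays j

/-- `ks` is (the index sequence of) an `x`-block: its actions (re)start the timer `x`. -/
def IsXBlock (ρ : TimedRun A n) (ks : List (Fin n)) (x : X) : Prop :=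
  ∃ k ∈ ks, ∃ c, ρ.upds k = some (x, c)

/-- Modified semantics from a total order on timers: in every race, any action of an `x`-block
is processed before any action of a `y`-block whenever `x < y`. -/
def OrderedSem [LT X] (ρ : TimedRun A n) : Prop :=
  ∀ (ks : List (Fin n)) (γ : Fate) (ks' : List (Fin n)) (γ' : Fate) (x y : X),
    IsBlock ρ ks γ → IsBlock ρ ks' γ' → IsXBlock ρ ks x → IsXBlock ρ ks' y → x < y →
      ∀ k ∈ ks, ∀ k' ∈ ks',
        ((k < k' ∧ delayBetween ρ k k' = 0) ∨ (k' < k ∧ delayBetween ρ k' k = 0)) → k < k'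

/-! ### Configurations, timer-equivalence and the region automaton -/

/-- Valuations `κ, κ'` (on the active timers of `q`) are timer-equivalent. -/
def ValEquiv (A : AT X I Q) (q : Q) (κ κ' : X → ℝ) : Prop :=
  ∀ x ∈ A.χ q, (⌊κ x⌋ = ⌊κ' x⌋) ∧ (Int.fract (κ x) = 0 ↔ Int.fract (κ' x) = 0) ∧
    ∀ y ∈ A.χ q, (Int.fract (κ x) ≤ Int.fract (κ y) ↔ Int.fract (κ' x) ≤ Int.fract (κ' y))

/-- Timer-equivalence of configurations. -/
def ConfigEquiv (A : AT X I Q) (c c' : Q × (X → ℝ)) : Prop :=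
  c.1 = c'.1 ∧ ValEquiv A c.1 c.2 c'.2

/-- A discrete transition between configurations, on action `a` with update `u`. -/
def DiscreteStep (A : AT X I Q) (c : Q × (X → ℝ)) (a : Act I X) (u : Upd X)
    (c' : Q × (X → ℝ)) : Prop :=
  A.δ c.1 a = some (c'.1, u) ∧ (∀ x, a = Act.timeout x → c.2 x = 0) ∧
    ∀ y ∈ A.χ c'.1,
      c'.2 y = u.elim (c.2 y) (fun p => if y = p.1 then ((p.2 : ℕ) : ℝ) else c.2 y)

/-- A delay transition between configurations, of duration `d ≥ 0`. -/
def DelayStep (A : AT X I Q) (c : Q × (X → ℝ)) (d : ℝ) (c' : Q × (X → ℝ)) : Prop :=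
  0 ≤ d ∧ c'.1 = c.1 ∧ (∀ x ∈ A.χ c.1, d ≤ c.2 x) ∧ ∀ x ∈ A.χ c.1, c'.2 x = c.2 x - d

/-- One step of a timed run between configurations: a delay or a discrete transition. -/
def Step (A : AT X I Q) (c c' : Q × (X → ℝ)) : Prop :=
  (∃ d, DelayStep A c d c') ∨ (∃ a u, DiscreteStep A c a u c')

/-- One transition of the region automaton between the classes of `c` and `c'`:
some representatives are related by a positive delay (`τ`) or a discrete transition. -/
def RegStep (A : AT X I Q) (c c' : Q × (X → ℝ)) : Prop :=
  ∃ c₁ c₂, ConfigEquiv A c c₁ ∧ ConfigEquiv A c' c₂ ∧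
    ((∃ d, 0 < d ∧ DelayStep A c₁ d c₂) ∨ ∃ a u, DiscreteStep A c₁ a u c₂)

/-! ### The extended run and relative elapsed time -/

open Classical in
/-- The timers discarded by the transition at index `k`. -/
noncomputable def discardedSet (ρ : TimedRun A n) (k : Fin n) : Finset X :=
  (A.χ (ρ.states k.castSucc)).filter (fun x => Discards ρ k x)

/-- Positions of actions in the extended run of `ρ`: `(k, 0)` is the `k`-th action of `ρ`,
and `(k, j)` for `1 ≤ j` is the `j`-th zero-delay pseudo-action (`●` or `×`) inserted after
it, one for each timer it discards. -/
def EPos (ρ : TimedRun A n) : Type := {p : Fin n × ℕ // p.2 ≤ (discardedSet ρ p.1).card}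

open Classical in
/-- Relative elapsed time between two positions of the extended run: the sum `d` of the delays
between them if the first occurs (weakly) before the second, and `-d` otherwise. -/
noncomputable def reltime (ρ : TimedRun A n) (p p' : EPos ρ) : ℝ :=
  if p.1.1 < p'.1.1 ∨ (p.1.1 = p'.1.1 ∧ p.1.2 ≤ p'.1.2) then delayBetween ρ p.1.1 p'.1.1
  else - delayBetween ρ p'.1.1 p.1.1

end AwT

/-! ### Linear-bounded Turing machines -/

/-- A (nondeterministic) linear-bounded Turing machine with alphabet `σ` and states `Q`.
A transition `(q, α, α', D, q')` reads `α`, writes `α'` and moves left (`D = false`) or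
right (`D = true`). -/
structure LBTM (σ Q : Type) where
  q0 : Q
  qF : Q
  T : Finset (Q × σ × σ × Bool × Q)

/-- One step of an LBTM on a tape of length `n`; configurations are (state, tape, head). -/
def LBTMStep {σ Q : Type} (M : LBTM σ Q) {n : ℕ}
    (c c' : Q × (Fin n → σ) × Fin n) : Prop :=
  ∃ α' : σ, ∃ D : Bool, (c.1, c.2.1 c.2.2, α', D, c'.1) ∈ M.T ∧
    c'.2.1 = Function.update c.2.1 c.2.2 α' ∧
    ((D = true ∧ (c'.2.2 : ℕ) = (c.2.2 : ℕ) + 1) ∨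
     (D = false ∧ (c.2.2 : ℕ) = (c'.2.2 : ℕ) + 1))

/-- `M` accepts the word `w`. -/
def LBTMAccepts {σ Q : Type} (M : LBTM σ Q) {n : ℕ} (hn : 0 < n) (w : Fin n → σ) : Prop :=
  ∃ c : Q × (Fin n → σ) × Fin n,
    Relation.ReflTransGen (LBTMStep M) (M.q0, w, ⟨0, hn⟩) c ∧ c.1 = M.qF


/-!
A timeout happens exactly `c` time units after the action that started its timer, so the actions
of a block move rigidly together, and every race between two blocks is a tight inequality
`time a ≤ time b + κ` between an action `a` of one and an action `b` of the other, where `a`, `b`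
and `κ` are read off the untimed trace.

If a race-free run has the same untimed trace as `ρ`, the time shift between the two runs is
constant on every block and strictly increases along every edge of the block graph of `ρ`, which
is therefore acyclic. Conversely, if the block graph of `ρ` is acyclic and has an edge, some
racing block has no outgoing edge. Delaying this block by an `ε` below every positive slack keeps
the run valid and padded (no constraint leaving the block is tight), removes all races of the
block and creates no new one, so finitely many such wiggles make the run race-free.
-/

namespace List

variable {α : Type*} {R : α → α → Prop}

theorem IsChain.exists_rel_of_getLast?_ne {l : List α} (h : l.IsChain R) {a : α} (ha : a ∈ l)
    (hlast : l.getLast? ≠ some a) : ∃ b ∈ l, R a b := by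
  induction l with
  | nil => simp at ha
  | cons c t ih =>
    cases t with
    | nil => simp_all
    | cons d t =>
      rw [isChain_cons_cons] at h
      rcases mem_cons.mp ha with rfl | ha
      · exact ⟨d, by simp, h.1⟩
      · obtain ⟨b, hb, hab⟩ := ih h.2 ha (by rwa [getLast?_cons_cons] at hlast)
        exact ⟨b, mem_cons_of_mem _ hb, hab⟩

theorem IsChain.exists_rel_of_head?_ne {l : List α} (h : l.IsChain R) {a : α} (ha : a ∈ l)
    (hhead : l.head? ≠ some a) : ∃ b ∈ l, R b a := by
  induction l with
  | nil => simp at ha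
  | cons c t ih =>
    rcases mem_cons.mp ha with rfl | ha
    · simp at hhead
    · cases t with
      | nil => simp at ha
      | cons d t =>
        rw [isChain_cons_cons] at h
        by_cases hd : d = a
        · exact ⟨c, mem_cons_self, hd ▸ h.1⟩
        · obtain ⟨b, hb, hba⟩ := ih h.2 ha (by simpa using hd)
          exact ⟨b, mem_cons_of_mem _ hb, hba⟩

theorem IsChain.reflTransGen_of_head?_eq {l : List α} (h : l.IsChain R) {r a : α}
    (hhead : l.head? = some r) (ha : a ∈ l) : Relation.ReflTransGen R r a :=
  h.induction (Relation.ReflTransGen R r) l (fun _ _ hxy hx => hx.tail hxy)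
    (fun hne => (Option.some_inj.1 ((head?_eq_some_head hne).symm.trans hhead)) ▸ .refl) a ha

theorem IsChain.eq_of_head?_eq (hR : Relator.RightUnique R) {l l' : List α} (h : l.IsChain R)
    (h' : l'.IsChain R) (hhead : l.head? = l'.head?)
    (hmax : ∀ a b, l.getLast? = some a → ¬ R a b)
    (hmax' : ∀ a b, l'.getLast? = some a → ¬ R a b) : l = l' := by
  induction l generalizing l' with
  | nil => simpa [eq_comm] using hhead
  | cons a t ih =>
    obtain ⟨t', rfl⟩ : ∃ t', l' = a :: t' := by
      cases l' with
      | nil => simp at hhead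
      | cons a' t' =>
        rw [head?_cons, head?_cons, Option.some_inj] at hhead
        exact ⟨t', by rw [hhead]⟩
    congr 1
    cases t with
    | nil =>
      cases t' with
      | nil => rfl
      | cons b' t' => exact absurd (isChain_cons_cons.mp h').1 (hmax a b' rfl)
    | cons b t =>
      cases t' with
      | nil => exact absurd (isChain_cons_cons.mp h).1 (hmax' a b rfl)
      | cons b' t' =>
        rw [isChain_cons_cons] at h h'
        refine ih h.2 h'.2 (by rw [head?_cons, head?_cons, hR h.1 h'.1]) ?_ ?_
        · exact fun c d hc => hmax c d (by rwa [getLast?_cons_cons])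
        · exact fun c d hc => hmax' c d (by rwa [getLast?_cons_cons])

end List

theorem exists_cycle_of_forall_exists_rel {α : Type*} [Finite α] [Nonempty α]
    {r : α → α → Prop} (h : ∀ a, ∃ b, r a b) :
    ∃ m, 0 < m ∧ ∃ f : Fin (m + 1) → α, f (Fin.last m) = f 0 ∧
      ∀ j : Fin m, r (f j.castSucc) (f j.succ) := by
  choose g hg using h
  let u : ℕ → α := fun i => g^[i] (Classical.arbitrary α)
  obtain ⟨i, j, hij, hu⟩ := Finite.exists_ne_map_eq_of_infinite u
  wlog hlt : i < j generalizing i j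
  · exact this j i hij.symm hu.symm (by omega)
  refine ⟨j - i, by omega, fun p => u (i + p), by simp [Nat.add_sub_cancel' hlt.le, hu], ?_⟩
  intro p
  simp only [Fin.val_castSucc, Fin.val_succ, ← add_assoc, u, Function.iterate_succ_apply']
  exact hg _

theorem Finset.exists_pos_forall_lt_of_pos (s : Finset ℝ) : ∃ ε > 0, ∀ r ∈ s, 0 < r → ε < r := by
  have h : ∀ᶠ ε in nhdsWithin (0 : ℝ) (Set.Ioi 0), ∀ r ∈ s, 0 < r → ε < r :=
    (Filter.eventually_all_finset s).2 fun r _ =>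
      Filter.eventually_imp_distrib_left.2 fun hr =>
        nhdsWithin_le_nhds (eventually_lt_nhds hr)
  obtain ⟨ε, hε, hpos⟩ := (h.and self_mem_nhdsWithin).exists
  exact ⟨ε, hpos, hε⟩

theorem Fin.not_strictMono_of_last_eq {β : Type*} [Preorder β] {m : ℕ} (hm : 0 < m)
    {u : Fin (m + 1) → β} (h : u (Fin.last m) = u 0) : ¬ StrictMono u := fun hu =>
  (hu (Fin.lt_def.2 hm : (0 : Fin (m + 1)) < Fin.last m)).ne' h

namespace AwT

variable {X I Q : Type} [DecidableEq X] {A : AT X I Q} {n : ℕ}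

def elapsed (d : Fin (n + 1) → ℝ) (j : Fin (n + 1)) : ℝ := ∑ p ∈ Finset.Iic j, d p

lemma elapsed_zero (d : Fin (n + 1) → ℝ) : elapsed d 0 = d 0 := by
  rw [elapsed, show Finset.Iic (0 : Fin (n + 1)) = {0} by ext; simp, Finset.sum_singleton]

lemma elapsed_succ (d : Fin (n + 1) → ℝ) (i : Fin n) :
    elapsed d i.succ = elapsed d i.castSucc + d i.succ := by
  have : Finset.Iic i.succ = Finset.cons i.succ (Finset.Iic i.castSucc) (by simp) := by
    ext p
    simp only [Finset.mem_Iic, Finset.cons_eq_insert, Finset.mem_insert, Fin.le_def, Fin.ext_iff,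
      Fin.val_succ, Fin.val_castSucc]
    omega
  rw [elapsed, this, Finset.sum_cons, add_comm, elapsed]

lemma elapsed_mono {d : Fin (n + 1) → ℝ} (hd : ∀ j, 0 ≤ d j) : Monotone (elapsed d) :=
  fun _ _ h => Finset.sum_le_sum_of_subset_of_nonneg (Finset.Iic_subset_Iic.2 h)
    fun p _ _ => hd p

namespace TimedRun

def time (ρ : TimedRun A n) (k : Fin n) : ℝ := elapsed ρ.delays k.castSucc

variable (ρ : TimedRun A n)

lemma time_mono : Monotone ρ.time :=
  fun _ _ h => elapsed_mono ρ.delays_nonneg (Fin.castSucc_le_castSucc_iff.2 h)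

lemma time_le_elapsed_last (k : Fin n) : ρ.time k ≤ elapsed ρ.delays (Fin.last n) :=
  elapsed_mono ρ.delays_nonneg (Fin.le_last _)

lemma delayBetween_eq {k k' : Fin n} (h : k ≤ k') : delayBetween ρ k k' = ρ.time k' - ρ.time k := by
  rw [delayBetween, ← Finset.sum_image (fun _ _ _ _ h => Fin.castSucc_injective _ h),
    Fin.finsetImage_castSucc_Ioc, time, time, elapsed, elapsed,
    ← Finset.Iic_union_Ioc_eq_Iic (Fin.castSucc_le_castSucc_iff.2 h),
    Finset.sum_union (Finset.Iic_disjoint_Ioc le_rfl)]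
  ring

end TimedRun

def Undisturbed (ρ : TimedRun A n) (x : X) (k : Fin n) (j : Fin (n + 1)) : Prop :=
  ∀ m : Fin n, k < m → m.castSucc < j → ρ.acts m ≠ Act.timeout x ∧ ¬ Discards ρ m x

section TimerValues

variable {ρ : TimedRun A n} {x : X}

lemma Undisturbed.mono {k : Fin n} {j j' : Fin (n + 1)} (h : Undisturbed ρ x k j) (hj : j' ≤ j) :
    Undisturbed ρ x k j' :=
  fun m hkm hmj => h m hkm (hmj.trans_le hj)

lemma Undisturbed.succ {k i : Fin n} (h : Undisturbed ρ x k i.castSucc)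
    (hi : ρ.acts i ≠ Act.timeout x ∧ ¬ Discards ρ i x) : Undisturbed ρ x k i.succ := by
  intro m hkm hmi
  rcases (Fin.castSucc_lt_succ_iff.1 hmi).lt_or_eq with hmi | rfl
  · exact h m hkm (Fin.castSucc_lt_castSucc_iff.2 hmi)
  · exact hi

lemma triggers_iff {k k' : Fin n} : Triggers ρ k k' ↔ k < k' ∧ ∃ x c, ρ.upds k = some (x, c) ∧
    ρ.acts k' = Act.timeout x ∧ Undisturbed ρ x k k'.castSucc := by
  simp only [Triggers, Undisturbed, Fin.castSucc_lt_castSucc_iff]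

lemma value_sub_delay_eq (ρ : TimedRun A n) {d : Fin (n + 1) → ℝ} {v : Fin (n + 1) → X → ℝ}
    (hv : ∀ k y, v k.succ y = (ρ.upds k).elim (v k.castSucc y - d k.castSucc)
      (fun p => if y = p.1 then ((p.2 : ℕ) : ℝ) else v k.castSucc y - d k.castSucc))
    {k : Fin n} {c : ℕ+} (hu : ρ.upds k = some (x, c)) {j : Fin (n + 1)} (hkj : k.castSucc < j)
    (hund : Undisturbed ρ x k j) :
    x ∈ A.χ (ρ.states j) ∧ v j x - d j = elapsed d k.castSucc + c - elapsed d j := by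
  induction j using Fin.induction with
  | zero => exact absurd hkj (Fin.not_lt_zero _)
  | succ i ih =>
    rw [elapsed_succ, hv]
    rcases (Fin.castSucc_lt_succ_iff.1 hkj).eq_or_lt with rfl | hki
    · have htr := ρ.trans k
      rw [hu] at htr
      refine ⟨A.update_mem _ _ _ _ _ htr, ?_⟩
      simp [hu]
    · obtain ⟨hx, hval⟩ := ih (Fin.castSucc_lt_castSucc_iff.2 hki)
        (hund.mono (Fin.castSucc_lt_succ).le)
      obtain ⟨hto, hnd⟩ := hund i hki (Fin.castSucc_lt_succ)
      have hnu : ∀ c', ρ.upds i ≠ some (x, c') := fun c' h => hnd ⟨hx, hto, Or.inr ⟨c', h⟩⟩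
      refine ⟨by_contra fun h => hnd ⟨hx, hto, Or.inl h⟩, ?_⟩
      cases hui : ρ.upds i with
      | none =>
        simp only [Option.elim]
        linarith
      | some p =>
        have : x ≠ p.1 := fun h => hnu p.2 (by rw [hui, h])
        simp only [Option.elim, if_neg this]
        linarith

lemma TimedRun.vals_sub_delays_eq (ρ : TimedRun A n) {k : Fin n} {c : ℕ+}
    (hu : ρ.upds k = some (x, c)) {j : Fin (n + 1)} (hkj : k.castSucc < j)
    (hund : Undisturbed ρ x k j) :
    x ∈ A.χ (ρ.states j) ∧ ρ.vals j x - ρ.delays j = ρ.time k + c - elapsed ρ.delays j :=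
  value_sub_delay_eq ρ ρ.val_step hu hkj hund

lemma TimedRun.elapsed_le_of_undisturbed (ρ : TimedRun A n) {k : Fin n} {c : ℕ+}
    (hu : ρ.upds k = some (x, c)) {j : Fin (n + 1)} (hkj : k.castSucc < j)
    (hund : Undisturbed ρ x k j) : elapsed ρ.delays j ≤ ρ.time k + c := by
  obtain ⟨hx, hval⟩ := ρ.vals_sub_delays_eq hu hkj hund
  linarith [ρ.delays_le j x hx]

lemma exists_start_of_active (ρ : TimedRun A n) {j : Fin (n + 1)} (hx : x ∈ A.χ (ρ.states j)) :
    ∃ k c, k.castSucc < j ∧ ρ.upds k = some (x, c) ∧ Undisturbed ρ x k j := by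
  induction j using Fin.induction with
  | zero => simp [ρ.init_state, A.init_active] at hx
  | succ i ih =>
    have htr := ρ.trans i
    by_cases hrestart : ∃ c, ρ.upds i = some (x, c)
    · obtain ⟨c, hc⟩ := hrestart
      refine ⟨i, c, Fin.castSucc_lt_succ, hc, fun m him hmi => ?_⟩
      exact absurd hmi (not_lt.2 (Fin.succ_le_castSucc_iff.2 him))
    have hprev : x ∈ A.χ (ρ.states i.castSucc) ∧ ρ.acts i ≠ Act.timeout x := by
      cases hui : ρ.upds i with
      | none =>
        rw [hui] at htr
        exact ⟨A.noupdate_sub _ _ _ htr hx, fun h => A.noupdate_timeout _ _ _ (h ▸ htr) hx⟩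
      | some p =>
        obtain ⟨y, c⟩ := p
        rw [hui] at htr
        have hyx : y ≠ x := fun h => hrestart ⟨c, by rw [hui, h]⟩
        refine ⟨A.update_sub _ _ _ _ _ htr (by simp [hx, Ne.symm hyx]), fun h => ?_⟩
        exact hyx (A.timeout_self _ _ _ _ _ (h ▸ htr))
    obtain ⟨k, c, hki, hu, hund⟩ := ih hprev.1
    refine ⟨k, c, hki.trans (Fin.castSucc_lt_succ), hu, hund.succ ⟨hprev.2, ?_⟩⟩
    rintro ⟨-, -, h | h⟩
    · exact h hx
    · exact hrestart h

lemma exists_triggers_of_timeout (ρ : TimedRun A n) {k' : Fin n}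
    (ha : ρ.acts k' = Act.timeout x) : ∃ k c, Triggers ρ k k' ∧ ρ.upds k = some (x, c) := by
  have hx : x ∈ A.χ (ρ.states k'.castSucc) := by
    have hdef := (A.defined_iff (ρ.states k'.castSucc) (ρ.acts k')).1 (by rw [ρ.trans k']; rfl)
    rw [ha] at hdef
    obtain ⟨y, hy, hxy⟩ := hdef.resolve_left (by rintro ⟨i, ⟨⟩⟩)
    cases hxy
    exact hy
  obtain ⟨k, c, hk, hu, hund⟩ := exists_start_of_active ρ hx
  exact ⟨k, c, triggers_iff.2 ⟨Fin.castSucc_lt_castSucc_iff.1 hk, x, c, hu, ha, hund⟩, hu⟩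

lemma Triggers.time_eq {k k' : Fin n} {c : ℕ+} (h : Triggers ρ k k')
    (hu : ρ.upds k = some (x, c)) : ρ.time k' = ρ.time k + c := by
  obtain ⟨hlt, y, c', hu', ha, hund⟩ := triggers_iff.1 h
  obtain ⟨rfl, rfl⟩ : x = y ∧ c = c' := by simpa [hu] using hu'
  have := (ρ.vals_sub_delays_eq hu (Fin.castSucc_lt_castSucc_iff.2 hlt) hund).2
  rw [ρ.timeout_zero k' x ha] at this
  show elapsed ρ.delays k'.castSucc = _
  linarith

lemma triggers_rightUnique : Relator.RightUnique (Triggers ρ) := by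
  intro k a b ha hb
  obtain ⟨hka, x, c, hu, hta, hunda⟩ := triggers_iff.1 ha
  obtain ⟨hkb, x', c', hu', htb, hundb⟩ := triggers_iff.1 hb
  obtain ⟨rfl, rfl⟩ : x = x' ∧ c = c' := by simpa [hu] using hu'
  rcases lt_trichotomy a b with hab | hab | hab
  · exact absurd hta (hundb a hka (Fin.castSucc_lt_castSucc_iff.2 hab)).1
  · exact hab
  · exact absurd htb (hunda b hkb (Fin.castSucc_lt_castSucc_iff.2 hab)).1

lemma triggers_leftUnique : Relator.LeftUnique (Triggers ρ) := by
  suffices h : ∀ a b k, Triggers ρ a k → Triggers ρ b k → ¬ a < b by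
    intro a b k ha hb
    exact le_antisymm (not_lt.1 (h b a k hb ha)) (not_lt.1 (h a b k ha hb))
  intro a b k ha hb hab
  obtain ⟨-, x, c, hu, hta, hund⟩ := triggers_iff.1 ha
  obtain ⟨hbk, y, c', hu', htb, -⟩ := triggers_iff.1 hb
  obtain rfl : y = x := by simpa [hta] using htb.symm
  have hbk' := Fin.castSucc_lt_castSucc_iff.2 hbk
  have hx := (ρ.vals_sub_delays_eq hu (Fin.castSucc_lt_castSucc_iff.2 hab)
    (hund.mono hbk'.le)).1
  exact (hund b hab hbk').2 ⟨hx, (hund b hab hbk').1, Or.inr ⟨c', hu'⟩⟩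

lemma time_add_one_le_of_transGen {a b : Fin n} (h : Relation.TransGen (Triggers ρ) a b) :
    a < b ∧ ρ.time a + 1 ≤ ρ.time b := by
  have step : ∀ {a b}, Triggers ρ a b → a < b ∧ ρ.time a + 1 ≤ ρ.time b := by
    intro a b h
    obtain ⟨-, x, c, hu, -⟩ := triggers_iff.1 h
    refine ⟨h.1, ?_⟩
    rw [h.time_eq hu]
    have : (1 : ℝ) ≤ c := by exact_mod_cast c.pos
    linarith
  induction h with
  | single h => exact step h
  | tail _ h ih => exact ⟨ih.1.trans (step h).1, by linarith [ih.2, (step h).2]⟩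

end TimerValues

def SameUntimed (σ ρ : TimedRun A n) : Prop :=
  σ.states = ρ.states ∧ σ.acts = ρ.acts ∧ σ.upds = ρ.upds

namespace SameUntimed

variable {σ ρ : TimedRun A n}

lemma discards (h : SameUntimed σ ρ) : Discards σ = Discards ρ := by
  obtain ⟨hs, ha, hu⟩ := h
  funext ℓ x
  simp only [Discards, hs, ha, hu]

lemma triggers (h : SameUntimed σ ρ) : Triggers σ = Triggers ρ := by
  funext k k'
  simp only [Triggers, h.2.1, h.2.2, h.discards]

lemma untime_eq (h : SameUntimed σ ρ) : untime σ = untime ρ := by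
  simp only [untime, h.1, h.2.1]

end SameUntimed

lemma WiggleSpec.sameUntimed {ρ σ : TimedRun A n} {S : Set (Fin n)} {ε : ℝ}
    (h : WiggleSpec ρ σ S ε) : SameUntimed σ ρ :=
  ⟨h.1, h.2.1, h.2.2.1⟩

lemma length_eq_of_untime_eq {n' : ℕ} {ρ : TimedRun A n} {σ : TimedRun A n'}
    (h : untime σ = untime ρ) : n' = n := by
  simpa [untime] using congrArg (fun p => p.1.length) h

lemma sameUntimed_of_untime_eq {ρ σ : TimedRun A n} (h : untime σ = untime ρ) :
    SameUntimed σ ρ := by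
  simp only [untime, List.ofFn_inj, funext_iff, Prod.ext_iff] at h
  obtain ⟨hk, hlast⟩ := h
  have hs : σ.states = ρ.states := funext fun j => by
    induction j using Fin.lastCases with
    | last => exact hlast
    | cast k => exact (hk k).1
  have ha : σ.acts = ρ.acts := funext fun k => (hk k).2
  refine ⟨hs, ha, funext fun k => ?_⟩
  have := (σ.trans k).symm.trans (hs ▸ ha ▸ ρ.trans k)
  simp only [Option.some.injEq, Prod.mk.injEq] at this
  exact this.2

def IsBlockList (ρ : TimedRun A n) (ks : List (Fin n)) : Prop :=
  ks ≠ [] ∧ ks.IsChain (Triggers ρ) ∧ (∀ k, ks.head? = some k → ∃ i, ρ.acts k = Act.input i) ∧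
    ∀ k k', ks.getLast? = some k → ¬ Triggers ρ k k'

lemma SameUntimed.isBlockList {σ ρ : TimedRun A n} (h : SameUntimed σ ρ) :
    IsBlockList σ = IsBlockList ρ := by
  funext ks
  simp only [IsBlockList, h.triggers, h.2.1]

open Classical in
noncomputable def fateOf (ρ : TimedRun A n) (ks : List (Fin n)) : Fate :=
  match ks.getLast? with
  | none => .bot
  | some k =>
    match ρ.upds k with
    | none => .bot
    | some (x, _) => if DiscardedAtZeroAfter ρ k x then .disc0 else .cross

lemma fateOf_spec (ρ : TimedRun A n) (ks : List (Fin n)) : FateOf ρ ks (fateOf ρ ks) := by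
  intro k hk
  refine ⟨fun hu => by simp [fateOf, hk, hu], fun x c hu => ?_⟩
  simp only [fateOf, hk, hu]
  exact ⟨fun h => if_pos h, fun h => if_neg h⟩

lemma FateOf.eq_fateOf {ρ : TimedRun A n} {ks : List (Fin n)} {γ : Fate} (hne : ks ≠ [])
    (h : FateOf ρ ks γ) : γ = fateOf ρ ks := by
  obtain ⟨k, hk⟩ := Option.isSome_iff_exists.1 (List.getLast?_isSome.2 hne)
  have hspec := fateOf_spec ρ ks k hk
  cases hu : ρ.upds k with
  | none => rw [(h k hk).1 hu, hspec.1 hu]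
  | some p =>
    by_cases hd : DiscardedAtZeroAfter ρ k p.1
    · rw [((h k hk).2 p.1 p.2 hu).1 hd, ((hspec.2 p.1 p.2 hu).1 hd)]
    · rw [((h k hk).2 p.1 p.2 hu).2 hd, ((hspec.2 p.1 p.2 hu).2 hd)]

lemma isBlock_iff {ρ : TimedRun A n} {ks : List (Fin n)} {γ : Fate} :
    IsBlock ρ ks γ ↔ IsBlockList ρ ks ∧ γ = fateOf ρ ks := by
  constructor
  · rintro ⟨hne, hc, hh, hl, hf⟩
    exact ⟨⟨hne, hc, hh, hl⟩, hf.eq_fateOf hne⟩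
  · rintro ⟨⟨hne, hc, hh, hl⟩, rfl⟩
    exact ⟨hne, hc, hh, hl, fateOf_spec ρ ks⟩

section Blocks

variable {ρ : TimedRun A n}

lemma not_triggers_of_input {p a : Fin n} {i : I} (ha : ρ.acts a = Act.input i) :
    ¬ Triggers ρ p a := by
  rintro ⟨-, x, c, -, hx, -⟩
  rw [ha] at hx
  cases hx

lemma le_of_reflTransGen {a b : Fin n} (h : Relation.ReflTransGen (Triggers ρ) a b) : a ≤ b := by
  rcases Relation.reflTransGen_iff_eq_or_transGen.1 h with rfl | h
  · exact le_rfl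
  · exact (time_add_one_le_of_transGen h).1.le

lemma exists_root (ℓ : Fin n) :
    ∃ r, Relation.ReflTransGen (Triggers ρ) r ℓ ∧ ∀ p, ¬ Triggers ρ p r := by
  induction ℓ using WellFoundedLT.induction with
  | _ ℓ ih =>
    by_cases h : ∃ p, Triggers ρ p ℓ
    · obtain ⟨p, hp⟩ := h
      obtain ⟨r, hr, hroot⟩ := ih p hp.1
      exact ⟨r, hr.tail hp, hroot⟩
    · exact ⟨ℓ, .refl, not_exists.1 h⟩

lemma exists_maximal_chain (r : Fin n) :
    ∃ l : List (Fin n), l.head? = some r ∧ l.IsChain (Triggers ρ) ∧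
      ∀ k k', l.getLast? = some k → ¬ Triggers ρ k k' := by
  induction r using WellFoundedGT.induction with
  | _ r ih =>
    by_cases h : ∃ s, Triggers ρ r s
    · obtain ⟨s, hs⟩ := h
      obtain ⟨l, hl, hc, hmax⟩ := ih s hs.1
      have hne : l ≠ [] := by rintro rfl; simp at hl
      refine ⟨r :: l, rfl, hc.cons fun y hy => ?_, fun k k' hk => hmax k k' ?_⟩
      · rw [hl, Option.mem_some_iff] at hy
        exact hy ▸ hs
      · simpa [List.getLast?_cons, List.getLast?_eq_some_getLast hne] using hk
    · refine ⟨[r], rfl, List.isChain_singleton r, fun k k' hk hkk' => h ⟨k', ?_⟩⟩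
      simp only [List.getLast?_singleton, Option.some_inj] at hk
      exact hk ▸ hkk'

namespace IsBlockList

variable {l l' : List (Fin n)} (hl : IsBlockList ρ l)
include hl

lemma exists_head : ∃ r, l.head? = some r ∧ ∀ p, ¬ Triggers ρ p r := by
  obtain ⟨r, hr⟩ := Option.isSome_iff_exists.1 (List.isSome_head?.2 hl.1)
  obtain ⟨i, hi⟩ := hl.2.2.1 r hr
  exact ⟨r, hr, fun p => not_triggers_of_input hi⟩

lemma reflTransGen_total {a b : Fin n} (ha : a ∈ l) (hb : b ∈ l) :
    Relation.ReflTransGen (Triggers ρ) a b ∨ Relation.ReflTransGen (Triggers ρ) b a := by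
  obtain ⟨r, hr, -⟩ := hl.exists_head
  exact Relation.ReflTransGen.total_of_right_unique triggers_rightUnique
    (hl.2.1.reflTransGen_of_head?_eq hr ha) (hl.2.1.reflTransGen_of_head?_eq hr hb)

lemma mem_of_triggers {a b : Fin n} (ha : a ∈ l) (hab : Triggers ρ a b) : b ∈ l := by
  obtain ⟨s, hs, has⟩ := hl.2.1.exists_rel_of_getLast?_ne ha fun hlast => hl.2.2.2 a b hlast hab
  rwa [← triggers_rightUnique has hab]

lemma mem_of_triggers' {a b : Fin n} (hb : b ∈ l) (hab : Triggers ρ a b) : a ∈ l := by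
  obtain ⟨r, hr, hroot⟩ := hl.exists_head
  obtain ⟨p, hp, hpb⟩ := hl.2.1.exists_rel_of_head?_ne hb
    fun h => hroot a (Option.some_inj.1 (hr.symm.trans h) ▸ hab)
  rwa [← triggers_leftUnique hpb hab]

lemma getLast?_eq {a : Fin n} (ha : a ∈ l) (hmax : ∀ b, ¬ Triggers ρ a b) :
    l.getLast? = some a := by
  by_contra hlast
  obtain ⟨b, -, hab⟩ := hl.2.1.exists_rel_of_getLast?_ne ha hlast
  exact hmax b hab

lemma le_of_getLast? {a b : Fin n} (ha : a ∈ l) (hb : l.getLast? = some b) : a ≤ b := by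
  rcases hl.reflTransGen_total ha (List.mem_of_getLast? hb) with h | h
  · exact le_of_reflTransGen h
  · rcases Relation.reflTransGen_iff_eq_or_transGen.1 h with rfl | h
    · exact le_rfl
    · obtain ⟨c, hbc, -⟩ := Relation.TransGen.head'_iff.1 h
      exact absurd hbc (hl.2.2.2 b c hb)

lemma time_add_one_le {a b : Fin n} (ha : a ∈ l) (hb : b ∈ l) (hab : a < b) :
    ρ.time a + 1 ≤ ρ.time b := by
  rcases hl.reflTransGen_total ha hb with h | h
  · rcases Relation.reflTransGen_iff_eq_or_transGen.1 h with rfl | h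
    · exact absurd hab (lt_irrefl _)
    · exact (time_add_one_le_of_transGen h).2
  · exact absurd (le_of_reflTransGen h) (not_le.2 hab)

lemma eq_of_mem (hl' : IsBlockList ρ l') {m : Fin n} (hm : m ∈ l) (hm' : m ∈ l') : l = l' := by
  obtain ⟨r, hr, hroot⟩ := hl.exists_head
  obtain ⟨r', hr', hroot'⟩ := hl'.exists_head
  have hU : Relator.RightUnique (Function.swap (Triggers ρ)) :=
    fun _ _ _ h h' => triggers_leftUnique h h'
  have hrr' : r = r' := by
    rcases Relation.ReflTransGen.total_of_right_unique hU
      (hl.2.1.reflTransGen_of_head?_eq hr hm).swap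
      (hl'.2.1.reflTransGen_of_head?_eq hr' hm').swap with h | h
    · rcases h.swap.cases_tail with h | ⟨p, -, hp⟩
      · exact h
      · exact absurd hp (hroot p)
    · rcases h.swap.cases_tail with h | ⟨p, -, hp⟩
      · exact h.symm
      · exact absurd hp (hroot' p)
  exact List.IsChain.eq_of_head?_eq triggers_rightUnique hl.2.1 hl'.2.1 (by rw [hr, hr', hrr'])
    hl.2.2.2 hl'.2.2.2

end IsBlockList

lemma exists_isBlockList_mem (ℓ : Fin n) : ∃ l, IsBlockList ρ l ∧ ℓ ∈ l := by
  obtain ⟨r, hrℓ, hroot⟩ := exists_root (ρ := ρ) ℓ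
  obtain ⟨l, hr, hc, hmax⟩ := exists_maximal_chain (ρ := ρ) r
  have hl : IsBlockList ρ l := by
    refine ⟨by rintro rfl; simp at hr, hc, fun k hk => ?_, hmax⟩
    obtain rfl := Option.some_inj.1 (hr.symm.trans hk)
    cases ha : ρ.acts r with
    | input i => exact ⟨i, rfl⟩
    | timeout x =>
      obtain ⟨p, -, hp, -⟩ := exists_triggers_of_timeout ρ ha
      exact absurd hp (hroot p)
  refine ⟨l, hl, ?_⟩
  induction hrℓ with
  | refl => exact List.mem_of_mem_head? hr
  | tail _ h ih => exact hl.mem_of_triggers ih h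

lemma finite_isBlockList (ρ : TimedRun A n) : {l | IsBlockList ρ l}.Finite :=
  Set.Finite.of_finite_image (f := List.head?) (Set.toFinite _) fun _ hl _ hl' h =>
    List.IsChain.eq_of_head?_eq triggers_rightUnique hl.2.1 hl'.2.1 h hl.2.2.2 hl'.2.2.2

end Blocks

def FirstDiscard (ρ : TimedRun A n) (k : Fin n) (x : X) (ℓ : Fin n) : Prop :=
  k < ℓ ∧ Discards ρ ℓ x ∧ ∀ m, k < m → m < ℓ → ¬ Discards ρ m x

/-- `time a ≤ time b + κ` holds in every run with this untimed trace, and the blocks of `a` and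
`b` race when it is tight. An action that triggers nothing is the last one of its block. -/
def RaceConstraint (ρ : TimedRun A n) (a b : Fin n) (κ : ℝ) : Prop :=
  (a < b ∧ κ = 0) ∨ ∃ x c, ρ.upds b = some (x, c) ∧ (∀ b', ¬ Triggers ρ b b') ∧
    FirstDiscard ρ b x a ∧ κ = c

def Edge (ρ : TimedRun A n) (l l' : List (Fin n)) : Prop :=
  ∃ a ∈ l, ∃ b ∈ l', ∃ κ, RaceConstraint ρ a b κ ∧ ρ.time a = ρ.time b + κ

def blockEdges (ρ : TimedRun A n) : Set (List (Fin n) × List (Fin n)) :=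
  {e | IsBlockList ρ e.1 ∧ IsBlockList ρ e.2 ∧ Edge ρ e.1 e.2}

lemma SameUntimed.raceConstraint {σ ρ : TimedRun A n} (h : SameUntimed σ ρ) :
    RaceConstraint σ = RaceConstraint ρ := by
  funext a b κ
  simp only [RaceConstraint, FirstDiscard, h.2.2, h.triggers, h.discards]

section Races

variable {ρ : TimedRun A n} {x : X}

/-- The first timeout of `x` after `k` would be triggered by `k`. -/
lemma undisturbed_of_forall_not_discards {k : Fin n} {c : ℕ+} (hu : ρ.upds k = some (x, c))
    (hmax : ∀ b, ¬ Triggers ρ k b) {j : Fin (n + 1)}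
    (hnd : ∀ m : Fin n, k < m → m.castSucc < j → ¬ Discards ρ m x) : Undisturbed ρ x k j := by
  intro m
  induction m using WellFoundedLT.induction with
  | _ m ih =>
    intro hkm hmj
    refine ⟨fun hto => hmax m (triggers_iff.2 ⟨hkm, x, c, hu, hto, fun m' hkm' hm'm => ?_⟩),
      hnd m hkm hmj⟩
    exact ih m' (Fin.castSucc_lt_castSucc_iff.1 hm'm) hkm' (hm'm.trans hmj)

namespace FirstDiscard

variable {k ℓ : Fin n} {c : ℕ+}

lemma undisturbed (h : FirstDiscard ρ k x ℓ) (hu : ρ.upds k = some (x, c))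
    (hmax : ∀ b, ¬ Triggers ρ k b) : Undisturbed ρ x k ℓ.castSucc :=
  undisturbed_of_forall_not_discards hu hmax fun m hkm hmℓ =>
    h.2.2 m hkm (Fin.castSucc_lt_castSucc_iff.1 hmℓ)

lemma eq {ℓ' : Fin n} (h : FirstDiscard ρ k x ℓ) (h' : FirstDiscard ρ k x ℓ') : ℓ = ℓ' := by
  rcases lt_trichotomy ℓ ℓ' with hlt | heq | hlt
  · exact absurd h.2.1 (h'.2.2 ℓ h.1 hlt)
  · exact heq
  · exact absurd h'.2.1 (h.2.2 ℓ' h'.1 hlt)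

lemma vals_sub_delays (h : FirstDiscard ρ k x ℓ) (hu : ρ.upds k = some (x, c))
    (hmax : ∀ b, ¬ Triggers ρ k b) :
    ρ.vals ℓ.castSucc x - ρ.delays ℓ.castSucc = ρ.time k + c - ρ.time ℓ :=
  (ρ.vals_sub_delays_eq hu (Fin.castSucc_lt_castSucc_iff.2 h.1) (h.undisturbed hu hmax)).2

end FirstDiscard

lemma discardedAtZeroAfter_iff {k : Fin n} {c : ℕ+} (hu : ρ.upds k = some (x, c))
    (hmax : ∀ b, ¬ Triggers ρ k b) :
    DiscardedAtZeroAfter ρ k x ↔ ∃ ℓ, FirstDiscard ρ k x ℓ ∧ ρ.time ℓ = ρ.time k + c := by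
  constructor
  · rintro ⟨ℓ, hkℓ, hd, hfirst, hzero⟩
    have h : FirstDiscard ρ k x ℓ := ⟨hkℓ, hd, hfirst⟩
    exact ⟨ℓ, h, by linarith [h.vals_sub_delays hu hmax]⟩
  · rintro ⟨ℓ, h, htime⟩
    exact ⟨ℓ, h.1, h.2.1, h.2.2, by linarith [h.vals_sub_delays hu hmax]⟩

lemma RaceConstraint.time_le {a b : Fin n} {κ : ℝ} (h : RaceConstraint ρ a b κ) :
    ρ.time a ≤ ρ.time b + κ := by
  rcases h with ⟨hab, rfl⟩ | ⟨x, c, hu, hmax, hfirst, rfl⟩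
  · simpa using ρ.time_mono hab.le
  · exact ρ.elapsed_le_of_undisturbed hu (Fin.castSucc_lt_castSucc_iff.2 hfirst.1)
      (hfirst.undisturbed hu hmax)

lemma prec_iff_edge {B B' : List (Fin n) × Fate} (hB' : IsBlock ρ B'.1 B'.2) :
    Prec ρ B B' ↔ Edge ρ B.1 B'.1 := by
  obtain ⟨⟨hne, -, -, hlast⟩, hfate⟩ := isBlock_iff.1 hB'
  constructor
  · rintro (⟨a, ha, b, hb, hab, hzero⟩ | ⟨hγ, b, x, c, hb, hu, a, ha, hba, hd, hfirst⟩)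
    · rw [ρ.delayBetween_eq hab.le] at hzero
      exact ⟨a, ha, b, hb, 0, Or.inl ⟨hab, rfl⟩, by linarith⟩
    · have hmax : ∀ b', ¬ Triggers ρ b b' := fun b' => hlast b b' hb
      have hD : DiscardedAtZeroAfter ρ b x := by
        by_contra hD
        have := ((fateOf_spec ρ B'.1 b hb).2 x c hu).2 hD
        rw [hfate, this] at hγ
        cases hγ
      obtain ⟨ℓ, hℓ, htime⟩ := (discardedAtZeroAfter_iff hu hmax).1 hD
      obtain rfl := hℓ.eq ⟨hba, hd, hfirst⟩
      exact ⟨ℓ, ha, b, List.mem_of_getLast? hb, c, Or.inr ⟨x, c, hu, hmax, hℓ, rfl⟩, htime⟩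
  · rintro ⟨a, ha, b, hb, κ, ⟨hab, rfl⟩ | ⟨x, c, hu, hmax, hfirst, rfl⟩, htime⟩
    · left
      exact ⟨a, ha, b, hb, hab, by rw [ρ.delayBetween_eq hab.le]; linarith⟩
    · right
      have hb' : B'.1.getLast? = some b := by
        by_contra h
        obtain ⟨b', -, hbb'⟩ := isBlock_iff.1 hB' |>.1.2.1.exists_rel_of_getLast?_ne hb h
        exact hmax b' hbb'
      have hD := (discardedAtZeroAfter_iff hu hmax).2 ⟨a, hfirst, htime⟩
      refine ⟨?_, b, x, c, hb', hu, a, ha, hfirst⟩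
      rw [hfate]
      exact ((fateOf_spec ρ B'.1 b hb').2 x c hu).1 hD

lemma IsBlockList.not_edge {l : List (Fin n)} (hl : IsBlockList ρ l) : ¬ Edge ρ l l := by
  rintro ⟨a, ha, b, hb, κ, ⟨hab, rfl⟩ | ⟨x, c, hu, hmax, hfirst, rfl⟩, htime⟩
  · linarith [hl.time_add_one_le ha hb hab]
  · exact absurd (hl.le_of_getLast? ha (hl.getLast?_eq hb hmax)) (not_le.2 hfirst.1)

lemma finite_blockEdges (ρ : TimedRun A n) : (blockEdges ρ).Finite :=
  ((finite_isBlockList ρ).prod (finite_isBlockList ρ)).subset fun _ he => ⟨he.1, he.2.1⟩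

lemma hasRace_iff : HasRace ρ ↔ (blockEdges ρ).Nonempty := by
  constructor
  · rintro ⟨B, B', hB, hB', -, hrace | hrace⟩
    · exact ⟨(B.1, B'.1), (isBlock_iff.1 hB).1, (isBlock_iff.1 hB').1, (prec_iff_edge hB').1 hrace⟩
    · exact ⟨(B'.1, B.1), (isBlock_iff.1 hB').1, (isBlock_iff.1 hB).1, (prec_iff_edge hB).1 hrace⟩
  · rintro ⟨⟨l, l'⟩, hl, hl', hedge⟩
    have hB' : IsBlock ρ l' (fateOf ρ l') := isBlock_iff.2 ⟨hl', rfl⟩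
    refine ⟨(l, fateOf ρ l), (l', fateOf ρ l'), isBlock_iff.2 ⟨hl, rfl⟩, hB', ?_,
      Or.inl ((prec_iff_edge hB').2 hedge)⟩
    rintro ⟨⟩
    exact hl.not_edge hedge

lemma hasCycle_of_edges {m : ℕ} (hm : 0 < m) {f : Fin (m + 1) → List (Fin n)}
    (hcyc : f (Fin.last m) = f 0) (hf : ∀ j : Fin m, (f j.castSucc, f j.succ) ∈ blockEdges ρ) :
    HasCycle ρ := by
  refine ⟨m, fun j => (f j, fateOf ρ (f j)), hm,
    fun j => isBlock_iff.2 ⟨show IsBlockList ρ (f j) from ?_, rfl⟩, by simp only [hcyc],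
    fun j => (prec_iff_edge (isBlock_iff.2 ⟨(hf j).2.1, rfl⟩)).2 (hf j).2.2⟩
  induction j using Fin.lastCases with
  | last => exact hcyc ▸ (hf ⟨0, hm⟩).1
  | cast j => exact (hf j).1

lemma HasCycle.hasRace {ρ : TimedRun A n} (h : HasCycle ρ) : HasRace ρ := by
  obtain ⟨m, f, hm, hf, -, hedge⟩ := h
  let j : Fin m := ⟨0, hm⟩
  exact hasRace_iff.2 ⟨((f j.castSucc).1, (f j.succ).1), (isBlock_iff.1 (hf _)).1,
    (isBlock_iff.1 (hf _)).1, (prec_iff_edge (hf _)).1 (hedge j)⟩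

end Races

section Necessity

variable {ρ σ : TimedRun A n}

lemma SameUntimed.shift_eq_of_reflTransGen (hs : SameUntimed σ ρ) {a b : Fin n}
    (h : Relation.ReflTransGen (Triggers ρ) a b) : σ.time a - ρ.time a = σ.time b - ρ.time b := by
  induction h with
  | refl => rfl
  | tail _ hbc ih =>
    obtain ⟨-, x, c, hu, -⟩ := triggers_iff.1 hbc
    have hσ : Triggers σ _ _ := hs.triggers ▸ hbc
    rw [ih, hσ.time_eq (hs.2.2 ▸ hu), hbc.time_eq hu]
    ring

lemma SameUntimed.shift_lt_of_edge (hs : SameUntimed σ ρ) (hσ : ¬ HasRace σ)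
    {l l' : List (Fin n)} (he : (l, l') ∈ blockEdges ρ) :
    ∃ a ∈ l, ∃ b ∈ l', σ.time a - ρ.time a < σ.time b - ρ.time b := by
  obtain ⟨hl, hl', a, ha, b, hb, κ, hab, htime⟩ := he
  have habσ : RaceConstraint σ a b κ := hs.raceConstraint ▸ hab
  have hne : σ.time a ≠ σ.time b + κ := fun h => hσ (hasRace_iff.2
    ⟨(l, l'), hs.isBlockList ▸ hl, hs.isBlockList ▸ hl', a, ha, b, hb, κ, habσ, h⟩)
  exact ⟨a, ha, b, hb, by linarith [lt_of_le_of_ne habσ.time_le hne]⟩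

lemma SameUntimed.not_hasCycle (hs : SameUntimed σ ρ) (hσ : ¬ HasRace σ) : ¬ HasCycle ρ := by
  rintro ⟨m, f, hm, hf, hlast, hedge⟩
  have hl : ∀ j, IsBlockList ρ (f j).1 := fun j => (isBlock_iff.1 (hf j)).1
  choose g hg using fun j => List.exists_mem_of_ne_nil _ (hl j).1
  have hshift : ∀ j, ∀ a ∈ (f j).1, σ.time a - ρ.time a = σ.time (g j) - ρ.time (g j) :=
    fun j a ha => ((hl j).reflTransGen_total ha (hg j)).elim hs.shift_eq_of_reflTransGen
      fun h => (hs.shift_eq_of_reflTransGen h).symm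
  refine Fin.not_strictMono_of_last_eq hm (u := fun j => σ.time (g j) - ρ.time (g j)) ?_
    (Fin.strictMono_iff_lt_succ.2 fun j => ?_)
  · exact hshift 0 _ (hlast ▸ hg _)
  · obtain ⟨a, ha, b, hb, hlt⟩ := hs.shift_lt_of_edge hσ
      ⟨hl _, hl _, (prec_iff_edge (hf j.succ)).1 (hedge j)⟩
    simpa only [← hshift _ a ha, ← hshift _ b hb] using hlt

end Necessity

section Rescheduling

noncomputable def replayVals (ρ : TimedRun A n) (d : Fin (n + 1) → ℝ) : Fin (n + 1) → X → ℝ :=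
  Fin.induction (fun _ => 0) fun k v y =>
    (ρ.upds k).elim (v y - d k.castSucc)
      (fun p => if y = p.1 then ((p.2 : ℕ) : ℝ) else v y - d k.castSucc)

noncomputable def TimedRun.reschedule (ρ : TimedRun A n) (d : Fin (n + 1) → ℝ)
    (hd : ∀ j, 0 ≤ d j)
    (hrun : ∀ (k : Fin n) (x : X) (c : ℕ+) (j : Fin (n + 1)), ρ.upds k = some (x, c) →
      k.castSucc < j → Undisturbed ρ x k j → elapsed d j ≤ elapsed d k.castSucc + c)
    (htrig : ∀ (k k' : Fin n) (x : X) (c : ℕ+), Triggers ρ k k' → ρ.upds k = some (x, c) →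
      elapsed d k'.castSucc = elapsed d k.castSucc + c) : TimedRun A n where
  states := ρ.states
  vals := replayVals ρ d
  delays := d
  acts := ρ.acts
  upds := ρ.upds
  init_state := ρ.init_state
  init_val _ := rfl
  delays_nonneg := hd
  delays_le j x hx := by
    obtain ⟨k, c, hkj, hu, hund⟩ := exists_start_of_active ρ hx
    have := (value_sub_delay_eq ρ (v := replayVals ρ d) (fun _ _ => rfl) hu hkj hund).2
    linarith [hrun k x c j hu hkj hund]
  trans := ρ.trans
  timeout_zero k' x ha := by
    obtain ⟨k, c, htr, hu⟩ := exists_triggers_of_timeout ρ ha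
    obtain ⟨hkk', y, c', hu', -, hund⟩ := triggers_iff.1 htr
    obtain ⟨rfl, rfl⟩ : x = y ∧ c = c' := by simpa [hu] using hu'
    have := (value_sub_delay_eq ρ (v := replayVals ρ d) (fun _ _ => rfl) hu
      (Fin.castSucc_lt_castSucc_iff.2 hkk') hund).2
    linarith [htrig k k' x c htr hu]
  val_step _ _ := rfl

end Rescheduling

section Wiggling

variable {ρ : TimedRun A n} {x : X}

open Classical in
lemma wiggledDelay_eq (ρ : TimedRun A n) (S : Set (Fin n)) (ε : ℝ) (j : Fin (n + 1)) :
    wiggledDelay ρ S ε j = ρ.delays j + (if j ∈ Fin.castSucc '' S then ε else 0)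
      - (if j ∈ Fin.succ '' S then ε else 0) := by
  have key : ∀ f g : Fin n → Fin (n + 1),
      (∃ k, f k = j ∧ k ∈ S ∧ ∀ k', g k' = j → k' ∉ S) ↔ j ∈ f '' S ∧ j ∉ g '' S := by
    simp only [Set.mem_image]
    exact fun f g => ⟨fun ⟨k, hk, hS, h⟩ => ⟨⟨k, hS, hk⟩, fun ⟨k', hS', hk'⟩ => h k' hk' hS'⟩,
      fun ⟨⟨k, hS, hk⟩, h⟩ => ⟨k, hk, hS, fun k' hk' hS' => h ⟨k', hS', hk'⟩⟩⟩
  rw [wiggledDelay, if_congr (key _ _) rfl rfl, if_congr (key _ _) rfl rfl]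
  split_ifs <;> simp_all

open Classical in
lemma elapsed_wiggledDelay (ρ : TimedRun A n) (S : Set (Fin n)) (ε : ℝ) (j : Fin (n + 1)) :
    elapsed (wiggledDelay ρ S ε) j =
      elapsed ρ.delays j + if j ∈ Fin.castSucc '' S then ε else 0 := by
  have hcs : ∀ i : Fin n, i.castSucc ∈ Fin.castSucc '' S ↔ i ∈ S :=
    fun i => Fin.castSucc_injective _ |>.mem_set_image
  induction j using Fin.induction with
  | zero =>
    have : (0 : Fin (n + 1)) ∉ Fin.succ '' S := fun ⟨k, _, hk⟩ => Fin.succ_ne_zero k hk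
    rw [elapsed_zero, elapsed_zero, wiggledDelay_eq, if_neg this, sub_zero]
  | succ i ih =>
    rw [elapsed_succ, elapsed_succ, ih, wiggledDelay_eq, hcs,
      (Fin.succ_injective _).mem_set_image]
    ring

open Classical in
lemma elapsed_wiggledDelay_castSucc (ρ : TimedRun A n) (S : Set (Fin n)) (ε : ℝ) (k : Fin n) :
    elapsed (wiggledDelay ρ S ε) k.castSucc = ρ.time k + if k ∈ S then ε else 0 := by
  rw [elapsed_wiggledDelay, (Fin.castSucc_injective _).mem_set_image, TimedRun.time]

open Classical in
lemma WiggleSpec.time_eq {σ : TimedRun A n} {S : Set (Fin n)} {ε : ℝ} (h : WiggleSpec ρ σ S ε)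
    (k : Fin n) : σ.time k = ρ.time k + if k ∈ S then ε else 0 := by
  rw [TimedRun.time, funext h.2.2.2, elapsed_wiggledDelay_castSucc]

lemma WiggleSpec.elapsed_last {σ : TimedRun A n} {S : Set (Fin n)} {ε : ℝ}
    (h : WiggleSpec ρ σ S ε) : elapsed σ.delays (Fin.last n) = elapsed ρ.delays (Fin.last n) := by
  classical
  have : Fin.last n ∉ Fin.castSucc '' S := fun ⟨k, _, hk⟩ => Fin.castSucc_ne_last k hk
  rw [funext h.2.2.2, elapsed_wiggledDelay, if_neg this, add_zero]

end Wiggling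

section Sinks

variable {ρ : TimedRun A n} {x : X}

lemma exists_sink_of_not_hasCycle (hcyc : ¬ HasCycle ρ)
    (hrace : (blockEdges ρ).Nonempty) :
    ∃ l, (∃ l', (l, l') ∈ blockEdges ρ ∨ (l', l) ∈ blockEdges ρ) ∧
      ∀ l', (l, l') ∉ blockEdges ρ := by
  by_contra! hsink
  let V := {l | ∃ l', (l, l') ∈ blockEdges ρ ∨ (l', l) ∈ blockEdges ρ}
  have : Finite V := Set.Finite.to_subtype <| (finite_isBlockList ρ).subset fun l hl => by
    obtain ⟨l', he | he⟩ := hl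
    exacts [he.1, he.2.1]
  obtain ⟨⟨l, l'⟩, he⟩ := hrace
  have : Nonempty V := ⟨⟨l, l', Or.inl he⟩⟩
  obtain ⟨m, hm, f, hf, hedge⟩ := exists_cycle_of_forall_exists_rel
    (r := fun v w : V => (v.1, w.1) ∈ blockEdges ρ) fun v => by
      obtain ⟨w, hw⟩ := hsink v.1 v.2
      exact ⟨⟨w, v.1, Or.inr hw⟩, hw⟩
  exact hcyc (hasCycle_of_edges hm (f := fun j => (f j).1) (congrArg Subtype.val hf) hedge)

lemma RaceConstraint.offset {a b : Fin n} {κ : ℝ} (h : RaceConstraint ρ a b κ) :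
    κ = 0 ∨ ∃ x c, ρ.upds b = some (x, c) ∧ κ = c := by
  rcases h with ⟨-, rfl⟩ | ⟨x, c, hu, -, -, rfl⟩
  exacts [Or.inl rfl, Or.inr ⟨x, c, hu, rfl⟩]

lemma elapsed_last_lt_of_undisturbed (hpad : Padded ρ) {k : Fin n} {c : ℕ+}
    (hu : ρ.upds k = some (x, c)) (hund : Undisturbed ρ x k (Fin.last n)) :
    elapsed ρ.delays (Fin.last n) < ρ.time k + c := by
  obtain ⟨hx, hval⟩ := ρ.vals_sub_delays_eq hu (Fin.castSucc_lt_last k) hund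
  refine lt_of_le_of_ne (ρ.elapsed_le_of_undisturbed hu (Fin.castSucc_lt_last k) hund) ?_
  intro h
  exact hpad.2.2 x hx (by linarith)

variable {l : List (Fin n)} (hl : IsBlockList ρ l) (hsink : ∀ l', (l, l') ∉ blockEdges ρ)
include hl hsink

lemma time_lt_of_sink {a b : Fin n} {κ : ℝ} (ha : a ∈ l) (h : RaceConstraint ρ a b κ) :
    ρ.time a < ρ.time b + κ := by
  refine lt_of_le_of_ne h.time_le fun heq => ?_
  obtain ⟨l', hl', hb⟩ := exists_isBlockList_mem (ρ := ρ) b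
  exact hsink l' ⟨hl, hl', a, ha, b, hb, κ, h, heq⟩

/-- Otherwise the first action after `a` to time out or discard `x` would happen at the same
time as `a`, giving an edge out of `l`; if there is none, `x` would reach zero at the end of the
run, which padding forbids. -/
lemma time_lt_of_sink_of_undisturbed (hpad : Padded ρ) {a k : Fin n} {c : ℕ+} (ha : a ∈ l)
    (hk : k ∉ l) (hu : ρ.upds k = some (x, c)) (hund : Undisturbed ρ x k a.castSucc) :
    ρ.time a < ρ.time k + c := by
  by_cases htrig : ∃ w, Triggers ρ k w
  · obtain ⟨w, hw⟩ := htrig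
    have hwl : w ∉ l := fun h => hk (hl.mem_of_triggers' h hw)
    have haw : a < w := by
      refine lt_of_le_of_ne (not_lt.1 fun hwa => ?_) fun h => hwl (h ▸ ha)
      obtain ⟨-, y, c', hu', hto, -⟩ := triggers_iff.1 hw
      obtain ⟨rfl, rfl⟩ : x = y ∧ c = c' := by simpa [hu] using hu'
      exact (hund w hw.1 (Fin.castSucc_lt_castSucc_iff.2 hwa)).1 hto
    have := time_lt_of_sink hl hsink ha (Or.inl ⟨haw, rfl⟩)
    rw [hw.time_eq hu] at this
    linarith
  push Not at htrig
  by_cases hdisc : ∃ ℓ, k < ℓ ∧ Discards ρ ℓ x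
  · obtain ⟨ℓ, ⟨hkℓ, hd⟩, hmin⟩ := WellFounded.has_min wellFounded_lt _ hdisc
    have hfirst : FirstDiscard ρ k x ℓ := ⟨hkℓ, hd, fun m hkm hmℓ hm => hmin m ⟨hkm, hm⟩ hmℓ⟩
    have hcons : RaceConstraint ρ ℓ k c := Or.inr ⟨x, c, hu, htrig, hfirst, rfl⟩
    have haℓ : a ≤ ℓ := not_lt.1 fun hℓa =>
      (hund ℓ hkℓ (Fin.castSucc_lt_castSucc_iff.2 hℓa)).2 hd
    by_cases hℓl : ℓ ∈ l
    · linarith [time_lt_of_sink hl hsink hℓl hcons, ρ.time_mono haℓ]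
    · have := time_lt_of_sink hl hsink ha
        (Or.inl ⟨lt_of_le_of_ne haℓ fun h => hℓl (h ▸ ha), rfl⟩)
      linarith [hcons.time_le]
  · push Not at hdisc
    have := elapsed_last_lt_of_undisturbed hpad hu
      (undisturbed_of_forall_not_discards hu htrig fun m hkm _ => hdisc m hkm)
    linarith [ρ.time_le_elapsed_last a]

end Sinks

section WiggleStep

variable {ρ : TimedRun A n}

def IsWiggleAmount (ρ : TimedRun A n) (ε : ℝ) : Prop :=
  0 < ε ∧ ε < ρ.delays (Fin.last n) ∧ ∀ (a b : Fin n) (κ : ℝ),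
    (κ = 0 ∨ ∃ x c, ρ.upds b = some (x, c) ∧ κ = c) →
      0 < ρ.time b + κ - ρ.time a → ε < ρ.time b + κ - ρ.time a

lemma exists_isWiggleAmount (hpad : Padded ρ) : ∃ ε, IsWiggleAmount ρ ε := by
  let offset : Fin n → Bool → ℝ := fun b t =>
    if t then (ρ.upds b).elim 0 (fun p => ((p.2 : ℕ) : ℝ)) else 0
  obtain ⟨ε, hε, hlt⟩ := Finset.exists_pos_forall_lt_of_pos <| insert (ρ.delays (Fin.last n))
    (Finset.univ.image fun p : Fin n × Fin n × Bool =>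
      ρ.time p.2.1 + offset p.2.1 p.2.2 - ρ.time p.1)
  refine ⟨ε, hε, hlt _ (Finset.mem_insert_self _ _) hpad.2.1, fun a b κ hκ hpos =>
    hlt _ (Finset.mem_insert_of_mem (Finset.mem_image.2 ?_)) hpos⟩
  rcases hκ with rfl | ⟨x, c, hu, rfl⟩
  · exact ⟨(a, b, false), Finset.mem_univ _, by simp [offset]⟩
  · exact ⟨(a, b, true), Finset.mem_univ _, by simp [offset, hu]⟩

variable {l : List (Fin n)} {ε : ℝ}

/-- A race constraint that is tight after the shift had slack `ε` or `-ε` before. -/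
lemma blockEdges_of_wiggleSpec {σ : TimedRun A n} (hσ : WiggleSpec ρ σ {k | k ∈ l} ε)
    (hε : IsWiggleAmount ρ ε) (hl : IsBlockList ρ l) {e : List (Fin n) × List (Fin n)}
    (he : e ∈ blockEdges σ) : e ∈ blockEdges ρ ∧ e.1 ≠ l ∧ e.2 ≠ l := by
  have hs := hσ.sameUntimed
  obtain ⟨he₁, he₂, hedge⟩ := he
  have hne : e.1 ≠ e.2 := fun h => he₁.not_edge (by rwa [← h] at hedge)
  obtain ⟨a, ha, b, hb, κ, hab, htime⟩ := hedge
  rw [hs.isBlockList] at he₁ he₂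
  rw [hs.raceConstraint] at hab
  simp only [hσ.time_eq, Set.mem_ofPred_eq] at htime
  have hεpos := hε.1
  by_cases hal : a ∈ l <;> by_cases hbl : b ∈ l <;>
    simp only [hal, hbl, if_true, if_false] at htime
  · exact absurd ((he₁.eq_of_mem hl ha hal).trans (hl.eq_of_mem he₂ hbl hb)) hne
  · linarith [hε.2.2 a b κ hab.offset (by linarith)]
  · linarith [hab.time_le]
  · exact ⟨⟨he₁, he₂, a, ha, b, hb, κ, hab, by linarith⟩, fun h => hal (h ▸ ha),
      fun h => hbl (h ▸ hb)⟩

lemma wiggledDelay_nonneg (hl : IsBlockList ρ l) (hsink : ∀ l', (l, l') ∉ blockEdges ρ)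
    (hε : IsWiggleAmount ρ ε) (j : Fin (n + 1)) : 0 ≤ wiggledDelay ρ {k | k ∈ l} ε j := by
  classical
  have := ρ.delays_nonneg j
  rw [wiggledDelay_eq]
  by_cases hprev : j ∈ Fin.succ '' {k | k ∈ l}
  swap
  · rw [if_neg hprev]
    split_ifs <;> linarith [hε.1]
  by_cases hcur : j ∈ Fin.castSucc '' {k | k ∈ l}
  · rw [if_pos hcur, if_pos hprev]
    linarith
  rw [if_neg hcur, if_pos hprev]
  obtain ⟨k, hk, rfl⟩ := hprev
  suffices ε < ρ.delays k.succ by linarith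
  rcases Fin.eq_castSucc_or_eq_last k.succ with ⟨m, hm⟩ | hlast
  · have hkm : k < m := by
      rw [Fin.lt_def]
      have := congrArg Fin.val hm
      simp only [Fin.val_succ, Fin.val_castSucc] at this
      omega
    have hgap : ρ.time m = ρ.time k + ρ.delays k.succ := by
      rw [TimedRun.time, ← hm, elapsed_succ]
      rfl
    have := time_lt_of_sink hl hsink hk (Or.inl ⟨hkm, rfl⟩)
    linarith [hε.2.2 k m 0 (Or.inl rfl) (by linarith)]
  · exact hlast ▸ hε.2.1

lemma elapsed_wiggledDelay_le (hpad : Padded ρ) (hl : IsBlockList ρ l)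
    (hsink : ∀ l', (l, l') ∉ blockEdges ρ) (hε : IsWiggleAmount ρ ε) {k : Fin n} {x : X}
    {c : ℕ+} (hu : ρ.upds k = some (x, c)) {j : Fin (n + 1)} (hkj : k.castSucc < j)
    (hund : Undisturbed ρ x k j) :
    elapsed (wiggledDelay ρ {k | k ∈ l} ε) j ≤
      elapsed (wiggledDelay ρ {k | k ∈ l} ε) k.castSucc + c := by
  classical
  have hold := ρ.elapsed_le_of_undisturbed hu hkj hund
  rw [elapsed_wiggledDelay, elapsed_wiggledDelay_castSucc]
  split_ifs with hj hk <;> try linarith [hε.1]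
  obtain ⟨a, ha, rfl⟩ := hj
  have := time_lt_of_sink_of_undisturbed hl hsink hpad ha hk hu hund
  have hta : ρ.time a = elapsed ρ.delays a.castSucc := rfl
  linarith [hε.2.2 a k c (Or.inr ⟨x, c, hu, rfl⟩) (by linarith)]

lemma elapsed_wiggledDelay_of_triggers (hl : IsBlockList ρ l) {k k' : Fin n} {x : X} {c : ℕ+}
    (htr : Triggers ρ k k') (hu : ρ.upds k = some (x, c)) :
    elapsed (wiggledDelay ρ {k | k ∈ l} ε) k'.castSucc =
      elapsed (wiggledDelay ρ {k | k ∈ l} ε) k.castSucc + c := by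
  classical
  rw [elapsed_wiggledDelay_castSucc, elapsed_wiggledDelay_castSucc, htr.time_eq hu]
  by_cases hk : k ∈ {k | k ∈ l}
  · rw [if_pos (show k' ∈ {k | k ∈ l} from hl.mem_of_triggers hk htr), if_pos hk]
    ring
  · rw [if_neg (show k' ∉ {k | k ∈ l} from fun h => hk (hl.mem_of_triggers' h htr)), if_neg hk]
    ring

lemma WiggleSpec.padded {σ : TimedRun A n} {S : Set (Fin n)} (hσ : WiggleSpec ρ σ S ε)
    (hpad : Padded ρ) (hε : IsWiggleAmount ρ ε) : Padded σ := by
  classical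
  have hεpos := hε.1
  refine ⟨?_, ?_, fun x hx => ?_⟩
  · have : (0 : Fin (n + 1)) ∉ Fin.succ '' S := fun ⟨k, _, hk⟩ => Fin.succ_ne_zero k hk
    rw [hσ.2.2.2, wiggledDelay_eq, if_neg this]
    split_ifs <;> linarith [hpad.1]
  · have : Fin.last n ∉ Fin.castSucc '' S := fun ⟨k, _, hk⟩ => Fin.castSucc_ne_last k hk
    rw [hσ.2.2.2, wiggledDelay_eq, if_neg this]
    split_ifs <;> linarith [hpad.2.1, hε.2.1]
  · have hs := hσ.sameUntimed
    obtain ⟨k, c, -, hu, hund⟩ := exists_start_of_active σ hx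
    have hold := elapsed_last_lt_of_undisturbed hpad (hs.2.2 ▸ hu)
      (by simpa only [Undisturbed, hs.2.1, hs.discards] using hund)
    rw [(σ.vals_sub_delays_eq hu (Fin.castSucc_lt_last k) hund).2, hσ.time_eq, hσ.elapsed_last]
    split_ifs <;> linarith

lemma exists_wiggleSpec_padded (hpad : Padded ρ) (hl : IsBlockList ρ l)
    (hsink : ∀ l', (l, l') ∉ blockEdges ρ) (hε : IsWiggleAmount ρ ε) :
    ∃ σ, WiggleSpec ρ σ {k | k ∈ l} ε ∧ Padded σ := by
  let σ := ρ.reschedule _ (wiggledDelay_nonneg hl hsink hε)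
    (fun _ _ _ _ hu hkj hund => elapsed_wiggledDelay_le hpad hl hsink hε hu hkj hund)
    (fun _ _ _ _ htr hu => elapsed_wiggledDelay_of_triggers hl htr hu)
  have hσ : WiggleSpec ρ σ {k | k ∈ l} ε := ⟨rfl, rfl, rfl, fun _ => rfl⟩
  exact ⟨σ, hσ, hσ.padded hpad hε⟩

end WiggleStep

lemma exists_wiggleStep {ρ : TimedRun A n} (hpad : Padded ρ) {l : List (Fin n)}
    (hl : IsBlockList ρ l) (hsink : ∀ l', (l, l') ∉ blockEdges ρ) :
    ∃ σ, WiggleStep ρ σ ∧ Padded σ ∧ blockEdges σ ⊆ {e ∈ blockEdges ρ | e.1 ≠ l ∧ e.2 ≠ l} := by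
  obtain ⟨ε, hε⟩ := exists_isWiggleAmount hpad
  obtain ⟨σ, hspec, hpadσ⟩ := exists_wiggleSpec_padded hpad hl hsink hε
  have hedges := fun e (he : e ∈ blockEdges σ) => blockEdges_of_wiggleSpec hspec hε hl he
  refine ⟨σ, ⟨l, fateOf ρ l, ε, hε.1.ne', isBlock_iff.2 ⟨hl, rfl⟩, hspec, hpadσ, ?_⟩, hpadσ,
    hedges⟩
  rintro γ₁ l₂ γ₂ hB₁ hB₂ - (hprec | hprec)
  · exact (hedges (l, l₂) ⟨(isBlock_iff.1 hB₁).1, (isBlock_iff.1 hB₂).1,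
      (prec_iff_edge hB₂).1 hprec⟩).2.1 rfl
  · exact (hedges (l₂, l) ⟨(isBlock_iff.1 hB₂).1, (isBlock_iff.1 hB₁).1,
      (prec_iff_edge hB₁).1 hprec⟩).2.2 rfl

lemma exists_raceFree_of_not_hasCycle (hcyc : ∀ ρ : TimedRun A n, Padded ρ → ¬ HasCycle ρ)
    {ρ : TimedRun A n} (hpad : Padded ρ) :
    ∃ σ, Relation.ReflTransGen WiggleStep ρ σ ∧ Padded σ ∧ ¬ HasRace σ := by
  induction hN : (blockEdges ρ).ncard using Nat.strong_induction_on generalizing ρ with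
  | _ N ih =>
    by_cases hrace : HasRace ρ
    · obtain ⟨l, ⟨l', hl'⟩, hsink⟩ := exists_sink_of_not_hasCycle (hcyc ρ hpad)
        (hasRace_iff.1 hrace)
      have hl : IsBlockList ρ l := hl'.elim (fun h => h.1) (fun h => h.2.1)
      obtain ⟨σ, hstep, hpadσ, hsub⟩ := exists_wiggleStep hpad hl hsink
      have hssub : blockEdges σ ⊂ blockEdges ρ :=
        (Set.ssubset_iff_of_subset fun e he => (hsub he).1).2 <| by
          rcases hl' with he | he
          exacts [⟨_, he, fun h => (hsub h).2.1 rfl⟩, ⟨_, he, fun h => (hsub h).2.2 rfl⟩]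
      obtain ⟨τ, hsteps, hpadτ, hτ⟩ :=
        ih _ (hN ▸ Set.ncard_lt_ncard hssub (finite_blockEdges ρ)) hpadσ rfl
      exact ⟨τ, .head hstep hsteps, hpadτ, hτ⟩
    · exact ⟨ρ, .refl, hpad, hrace⟩

lemma untime_eq_of_wiggleSteps {ρ σ : TimedRun A n}
    (h : Relation.ReflTransGen WiggleStep ρ σ) : untime σ = untime ρ := by
  induction h with
  | refl => rfl
  | tail _ hstep ih =>
    obtain ⟨_, _, _, -, -, hspec, -⟩ := hstep
    exact hspec.sameUntimed.untime_eq.trans ih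

lemma not_hasCycle_of_raceAvoiding (hA : RaceAvoiding A) :
    ∀ (n : ℕ) (ρ : TimedRun A n), Padded ρ → ¬ HasCycle ρ := fun n ρ hpad hcyc => by
  obtain ⟨n', σ, -, hσ, hu⟩ := hA n ρ hpad hcyc.hasRace
  obtain rfl := length_eq_of_untime_eq hu
  exact (sameUntimed_of_untime_eq hu).not_hasCycle hσ hcyc

lemma wigglable_of_not_hasCycle (hcyc : ∀ (n : ℕ) (ρ : TimedRun A n), Padded ρ → ¬ HasCycle ρ) :
    ∀ (n : ℕ) (ρ : TimedRun A n), Padded ρ → HasRace ρ → Wigglable ρ := fun n ρ hpad _ => by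
  obtain ⟨σ, hsteps, hpadσ, hσ⟩ := exists_raceFree_of_not_hasCycle (hcyc n) hpad
  exact ⟨σ, hsteps, hpadσ, hσ, untime_eq_of_wiggleSteps hsteps⟩

lemma raceAvoiding_of_wigglable
    (h : ∀ (n : ℕ) (ρ : TimedRun A n), Padded ρ → HasRace ρ → Wigglable ρ) :
    RaceAvoiding A := fun n ρ hpad hrace => by
  obtain ⟨σ, -, hpadσ, hσ, hu⟩ := h n ρ hpad hrace
  exact ⟨n, σ, hpadσ, hσ, hu⟩

end AwT

theorem race_avoiding_characterization_general {X I Q : Type} [DecidableEq X] (A : AwT.AT X I Q) :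
    (AwT.RaceAvoiding A ↔
      ∀ (n : ℕ) (ρ : AwT.TimedRun A n), AwT.Padded ρ → AwT.HasRace ρ → AwT.Wigglable ρ) ∧
    (AwT.RaceAvoiding A ↔
      ∀ (n : ℕ) (ρ : AwT.TimedRun A n), AwT.Padded ρ → ¬ AwT.HasCycle ρ) := by
  open AwT in
  exact ⟨⟨fun hA => wigglable_of_not_hasCycle (not_hasCycle_of_raceAvoiding hA),
      raceAvoiding_of_wigglable⟩,
    ⟨not_hasCycle_of_raceAvoiding,
      fun hcyc => raceAvoiding_of_wigglable (wigglable_of_not_hasCycle hcyc)⟩⟩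

/-- An AT `A` is race-avoiding iff every padded timed run of `A` with races
can be wiggled, and this holds iff the block graph of every padded timed run of `A` is
acyclic. -/
theorem race_avoiding_characterization {X I Q : Type} [DecidableEq X] [Fintype X] [Fintype I]
    [Fintype Q] (A : AwT.AT X I Q) :
    (AwT.RaceAvoiding A ↔
      ∀ (n : ℕ) (ρ : AwT.TimedRun A n), AwT.Padded ρ → AwT.HasRace ρ → AwT.Wigglable ρ) ∧
    (AwT.RaceAvoiding A ↔
      ∀ (n : ℕ) (ρ : AwT.TimedRun A n), AwT.Padded ρ → ¬ AwT.HasCycle ρ) :=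
  race_avoiding_characterization_general A
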